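/- arXiv:1708.02116 — 2 statements merged into one kernel-verified Lean document; each statement's English description precedes it below -/
import Mathlib

section
/- Let {a_ℓ}_{ℓ=1}^Q and {b_ℓ}_{ℓ=1}^Q be two families of non-negative real numbers. Suppose there exists a sequence of natural numbers k_i → ∞ such that ∑_{ℓ=1}^Q a_ℓ^{k_i} = ∑_{ℓ=1}^Q b_ℓ^{k_i} for all i. Then the two families coincide as multisets, i.e. there is a permutation σ of {1,…,Q} with b_ℓ = a_{σ(ℓ)} for all ℓ. -/
/-! Let `M` be the largest value occurring in either family. After division by `M ^ k i`, every
term with value below `M` tends to `0`, so the normalized power sums tend to the multiplicity of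
`M`; hence `M` occurs equally often in both families. Removing one copy of `M` from each and
inducting on the size shows that the two multisets of values agree, and equal multisets of values
differ by a permutation of the indices. -/

open Filter Topology
open scoped NNReal

namespace Multiset

theorem tendsto_sum_map_div_pow_count {s : Multiset ℝ≥0} {M : ℝ≥0} (hM : M ≠ 0)
    (hsM : ∀ x ∈ s, x ≤ M) :
    Tendsto (fun n : ℕ => (s.map fun x => (x / M) ^ n).sum) atTop (𝓝 (s.count M)) := by
  induction s using Multiset.induction_on with
  | empty => simp
  | cons y s ih =>
    simp only [map_cons, sum_cons, count_cons, Nat.cast_add, add_comm (count M s : ℝ≥0)]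
    refine Tendsto.add ?_ (ih fun x hx => hsM x (mem_cons_of_mem hx))
    rcases (hsM y (mem_cons_self y s)).eq_or_lt with rfl | hy
    · rw [if_pos rfl, Nat.cast_one]
      exact tendsto_const_nhds.congr fun n => by rw [div_self hM, one_pow]
    · simpa [hy.ne'] using NNReal.tendsto_pow_atTop_nhds_zero_of_lt_one
        ((div_lt_one (pos_iff_ne_zero.2 hM)).2 hy)

theorem count_eq_of_sum_map_pow_eq {k : ℕ → ℕ} (hk : Tendsto k atTop atTop)
    {s t : Multiset ℝ≥0} {M : ℝ≥0} (hM : M ≠ 0) (hsM : ∀ x ∈ s, x ≤ M) (htM : ∀ x ∈ t, x ≤ M)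
    (h : ∀ i, (s.map (· ^ k i)).sum = (t.map (· ^ k i)).sum) : s.count M = t.count M := by
  have hdiv (u : Multiset ℝ≥0) (n : ℕ) :
      (u.map fun x => (x / M) ^ n).sum = (u.map (· ^ n)).sum / M ^ n := by
    simp only [div_pow, sum_map_div]
  have hs := (tendsto_sum_map_div_pow_count hM hsM).comp hk
  have ht := (tendsto_sum_map_div_pow_count hM htM).comp hk
  simp only [Function.comp_def, hdiv, h] at hs ht
  exact_mod_cast tendsto_nhds_unique hs ht

theorem eq_of_sum_map_pow_eq {k : ℕ → ℕ} (hk : Tendsto k atTop atTop) {s t : Multiset ℝ≥0}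
    (hcard : card s = card t) (h : ∀ i, (s.map (· ^ k i)).sum = (t.map (· ^ k i)).sum) :
    s = t := by
  induction hn : card s generalizing s t with
  | zero => rw [card_eq_zero.1 hn, card_eq_zero.1 (hcard.symm.trans hn)]
  | succ n ih =>
    obtain ⟨M, hM, hM_max⟩ := (s + t).toFinset.exists_max_image id <| by
      simp [← card_pos, hn]
    rw [mem_toFinset, mem_add] at hM
    have hsM : ∀ x ∈ s, x ≤ M := fun x hx => hM_max x (by simp [hx])
    have htM : ∀ x ∈ t, x ≤ M := fun x hx => hM_max x (by simp [hx])
    rcases eq_or_ne M 0 with rfl | hM0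
    · rw [eq_replicate_card.2 fun x hx => nonpos_iff_eq_zero.1 (hsM x hx),
        eq_replicate_card.2 fun x hx => nonpos_iff_eq_zero.1 (htM x hx), hcard]
    have hcount := count_eq_of_sum_map_pow_eq hk hM0 hsM htM h
    obtain ⟨hMs, hMt⟩ : M ∈ s ∧ M ∈ t := by
      simpa only [← count_pos, hcount, or_self, and_self] using hM
    rw [← cons_erase hMs, ← cons_erase hMt] at h ⊢
    simp only [map_cons, sum_cons, add_right_inj] at h
    have hcard' : card (s.erase M) = card (t.erase M) := by
      simp [card_erase_of_mem, hMs, hMt, hcard]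
    rw [ih hcard' h (by simp [card_erase_of_mem, hMs, hn])]

end Multiset

theorem Finset.exists_perm_of_map_univ_val_eq {ι α : Type*} [Fintype ι] {a b : ι → α}
    (h : Finset.univ.val.map a = Finset.univ.val.map b) :
    ∃ σ : Equiv.Perm ι, ∀ i, b i = a (σ i) := by
  classical
  have hfiber (c : α) : Fintype.card {i // b i = c} = Fintype.card {i // a i = c} := by
    simpa [Fintype.card_subtype, Finset.card_def, Multiset.count_map, eq_comm]
      using congrArg (Multiset.count c) h.symm
  exact ⟨Equiv.ofFiberEquiv fun c => Fintype.equivOfCardEq (hfiber c),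
    fun i => (Equiv.ofFiberEquiv_map _ i).symm⟩

theorem stmt_0_general (Q : ℕ) (a b : Fin Q → ℝ)
    (ha : ∀ ℓ, 0 ≤ a ℓ) (hb : ∀ ℓ, 0 ≤ b ℓ)
    (k : ℕ → ℕ) (hk : StrictMono k)
    (heq : ∀ i, ∑ ℓ, a ℓ ^ k i = ∑ ℓ, b ℓ ^ k i) :
    ∃ σ : Equiv.Perm (Fin Q), ∀ ℓ, b ℓ = a (σ ℓ) := by
  lift a to Fin Q → ℝ≥0 using ha
  lift b to Fin Q → ℝ≥0 using hb
  have hpow (i : ℕ) : ∑ ℓ, a ℓ ^ k i = ∑ ℓ, b ℓ ^ k i := by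
    simpa only [← NNReal.coe_pow, ← NNReal.coe_sum, NNReal.coe_inj] using heq i
  have hmap : Finset.univ.val.map a = Finset.univ.val.map b :=
    Multiset.eq_of_sum_map_pow_eq hk.tendsto_atTop (by simp)
      (by simpa only [Multiset.map_map, Function.comp_def, Finset.sum_map_val] using hpow)
  obtain ⟨σ, hσ⟩ := Finset.exists_perm_of_map_univ_val_eq hmap
  exact ⟨σ, fun ℓ => congrArg NNReal.toReal (hσ ℓ)⟩

theorem stmt_0 (Q : ℕ) (hQ : 0 < Q) (a b : Fin Q → ℝ)
    (ha : ∀ ℓ, 0 ≤ a ℓ) (hb : ∀ ℓ, 0 ≤ b ℓ)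
    (k : ℕ → ℕ) (hk : StrictMono k)
    (heq : ∀ i, ∑ ℓ, a ℓ ^ k i = ∑ ℓ, b ℓ ^ k i) :
    ∃ σ : Equiv.Perm (Fin Q), ∀ ℓ, b ℓ = a (σ ℓ) :=
  stmt_0_general Q a b ha hb k hk heq
end

section
/- Let y₀,…,y_k ∈ B₁(0) ⊂ ℝ^m be points which ρ-effectively span a k-dimensional affine subspace, i.e. dist(y_i, y₀ + span[y₁-y₀,…,y_{i-1}-y₀]) ≥ 2ρ for all i = 1,…,k. Then for every point x ∈ y₀ + span[y₁-y₀,…,y_k-y₀] there exists a unique choice of coefficients α₁,…,α_k ∈ ℝ with x = y₀ + ∑ α_i (y_i - y₀) and |α_i| ≤ C(m,ρ)|x - y₀| for a constant C depending only on m and ρ. -/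
/-!
Write `v i = y (i+1) - y 0`. Separation says `v i` is at distance at least `δ = 2ρ` from the span
of the earlier `v j`, so in `w = ∑ α j • v j` the last coefficient satisfies `|α_last| δ ≤ ‖w‖`.
Removing the last term leaves a vector of norm at most `(1 + R/δ) ‖w‖`, where `‖v i‖ ≤ R = 2`,
and induction on the number of vectors gives `|α i| ≤ (1 + R/δ)^k / δ · ‖w‖`. For `w = 0` this is
linear independence, hence uniqueness of the coefficients.
-/

open Metric

/-- The points `y 0, …, y k ∈ ℝ^m` `ρ`-effectively span a `k`-dimensional affine subspace:
`dist(y i, y 0 + span[y 1 - y 0, …, y (i-1) - y 0]) ≥ 2ρ` for every `i = 1, …, k`. -/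
def effSpan {m : ℕ} (k : ℕ) (ρ : ℝ) (y : Fin (k+1) → EuclideanSpace ℝ (Fin m)) : Prop :=
  ∀ i : Fin (k+1), 0 < (i : ℕ) →
    2 * ρ ≤ infDist (y i)
      ((AffineSubspace.mk' (y 0) (Submodule.span ℝ
        ((fun j => y j - y 0) '' {j : Fin (k+1) | 0 < (j : ℕ) ∧ (j : ℕ) < (i : ℕ)}))) :
        Set (EuclideanSpace ℝ (Fin m)))

section Separated

variable {𝕜 E : Type*} [NormedField 𝕜] [SeminormedAddCommGroup E] [NormedSpace 𝕜 E]

theorem norm_mul_le_norm_smul_add_of_mem {W : Submodule 𝕜 E} {v s : E} {δ : ℝ}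
    (hv : ∀ u ∈ W, δ ≤ ‖v - u‖) (hs : s ∈ W) (a : 𝕜) : ‖a‖ * δ ≤ ‖a • v + s‖ := by
  rcases eq_or_ne a 0 with rfl | ha
  · simp
  have : a • v + s = a • (v - (-a⁻¹) • s) := by
    rw [smul_sub, smul_smul, mul_neg, mul_inv_cancel₀ ha, neg_smul, one_smul, sub_neg_eq_add]
  rw [this, norm_smul]
  exact mul_le_mul_of_nonneg_left (hv _ (W.smul_mem _ hs)) (norm_nonneg a)

theorem norm_coeff_le_of_separated {k : ℕ} (v : Fin k → E) {R δ : ℝ} (hδ : 0 < δ)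
    (hR : ∀ i, ‖v i‖ ≤ R)
    (hsep : ∀ i, ∀ u ∈ Submodule.span 𝕜 (v '' Set.Iio i), δ ≤ ‖v i - u‖) (α : Fin k → 𝕜)
    (i : Fin k) : ‖α i‖ ≤ (1 + R / δ) ^ k / δ * ‖∑ j, α j • v j‖ := by
  induction k with
  | zero => exact i.elim0
  | succ k ih =>
    set w := ∑ j, α j • v j
    set s := ∑ j : Fin k, α j.castSucc • v j.castSucc
    have hw : w = α (Fin.last k) • v (Fin.last k) + s := by
      rw [add_comm]; exact Fin.sum_univ_castSucc _
    have hs : s ∈ Submodule.span 𝕜 (v '' Set.Iio (Fin.last k)) :=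
      Submodule.sum_mem _ fun j _ => Submodule.smul_mem _ _
        (Submodule.subset_span ⟨j.castSucc, Fin.castSucc_lt_last j, rfl⟩)
    have hlast : ‖α (Fin.last k)‖ ≤ ‖w‖ / δ := by
      rw [le_div_iff₀ hδ, hw]
      exact norm_mul_le_norm_smul_add_of_mem (hsep _) hs _
    have hR0 : 0 ≤ R := (norm_nonneg _).trans (hR (Fin.last k))
    have hK : 1 ≤ 1 + R / δ := le_add_of_nonneg_right (div_nonneg hR0 hδ.le)
    have hs_norm : ‖s‖ ≤ (1 + R / δ) * ‖w‖ := calc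
      ‖s‖ = ‖w - α (Fin.last k) • v (Fin.last k)‖ := by rw [hw, add_sub_cancel_left]
      _ ≤ ‖w‖ + ‖α (Fin.last k)‖ * R := by
        grw [norm_sub_le, norm_smul, hR]
      _ ≤ ‖w‖ + ‖w‖ / δ * R := by gcongr
      _ = (1 + R / δ) * ‖w‖ := by ring
    have hsep' : ∀ i, ∀ u ∈ Submodule.span 𝕜 ((v ∘ Fin.castSucc) '' Set.Iio i),
        δ ≤ ‖v i.castSucc - u‖ := by
      refine fun i u hu => hsep i.castSucc u (Submodule.span_mono ?_ hu)
      rintro _ ⟨j, hj, rfl⟩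
      exact ⟨j.castSucc, Fin.castSucc_lt_castSucc_iff.2 hj, rfl⟩
    induction i using Fin.lastCases with
    | last => calc
        ‖α (Fin.last k)‖ ≤ 1 / δ * ‖w‖ := by rwa [one_div_mul_eq_div]
        _ ≤ (1 + R / δ) ^ (k + 1) / δ * ‖w‖ := by gcongr; exact one_le_pow₀ hK
    | cast i => calc
        ‖α i.castSucc‖ ≤ (1 + R / δ) ^ k / δ * ‖s‖ :=
          ih (v ∘ Fin.castSucc) (fun j => hR _) hsep' (α ∘ Fin.castSucc) i
        _ ≤ (1 + R / δ) ^ k / δ * ((1 + R / δ) * ‖w‖) := by gcongr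
        _ = (1 + R / δ) ^ (k + 1) / δ * ‖w‖ := by ring

theorem linearIndependent_of_separated {k : ℕ} (v : Fin k → E) {R δ : ℝ} (hδ : 0 < δ)
    (hR : ∀ i, ‖v i‖ ≤ R)
    (hsep : ∀ i, ∀ u ∈ Submodule.span 𝕜 (v '' Set.Iio i), δ ≤ ‖v i - u‖) :
    LinearIndependent 𝕜 v := by
  refine Fintype.linearIndependent_iff.2 fun α hα i => norm_le_zero_iff.1 ?_
  simpa [hα] using norm_coeff_le_of_separated v hδ hR hsep α i

end Separated

theorem effSpan.separated {m k : ℕ} {ρ : ℝ} {y : Fin (k + 1) → EuclideanSpace ℝ (Fin m)}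
    (hy : effSpan k ρ y) (i : Fin k) :
    ∀ u ∈ Submodule.span ℝ ((fun j : Fin k => y j.succ - y 0) '' Set.Iio i),
      2 * ρ ≤ ‖y i.succ - y 0 - u‖ := by
  intro u hu
  have hu' : u ∈ Submodule.span ℝ
      ((fun j => y j - y 0) '' {j : Fin (k + 1) | 0 < (j : ℕ) ∧ (j : ℕ) < i.succ}) := by
    refine Submodule.span_mono ?_ hu
    rintro _ ⟨j, hj, rfl⟩
    exact ⟨j.succ, ⟨j.succ_pos, Fin.succ_lt_succ_iff.2 hj⟩, rfl⟩
  calc 2 * ρ ≤ infDist (y i.succ) _ := hy i.succ i.succ_pos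
    _ ≤ dist (y i.succ) (u +ᵥ y 0) :=
      infDist_le_dist_of_mem (AffineSubspace.vadd_mem_mk' _ hu')
    _ = ‖y i.succ - y 0 - u‖ := by rw [dist_eq_norm, vadd_eq_add, sub_add_eq_sub_sub_swap]

theorem stmt_9 (m k : ℕ) (ρ : ℝ) (hρ : 0 < ρ) :
    ∃ C : ℝ, 0 < C ∧ ∀ y : Fin (k+1) → EuclideanSpace ℝ (Fin m),
      (∀ i, y i ∈ ball (0 : EuclideanSpace ℝ (Fin m)) 1) →
      effSpan k ρ y →
      ∀ x ∈ ((AffineSubspace.mk' (y 0) (Submodule.span ℝ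
          (Set.range fun i : Fin k => y i.succ - y 0))) :
          Set (EuclideanSpace ℝ (Fin m))),
        (∃! α : Fin k → ℝ, x = y 0 + ∑ i, α i • (y i.succ - y 0)) ∧
        (∀ α : Fin k → ℝ, x = y 0 + ∑ i, α i • (y i.succ - y 0) →
          ∀ i, |α i| ≤ C * ‖x - y 0‖) := by
  refine ⟨(1 + 2 / (2 * ρ)) ^ k / (2 * ρ), by positivity, fun y hy hspan x hx => ?_⟩
  set v := fun i : Fin k => y i.succ - y 0
  have hv : ∀ i, ‖v i‖ ≤ 2 := fun i => by
    linarith [norm_sub_le (y i.succ) (y 0), mem_ball_zero_iff.1 (hy i.succ),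
      mem_ball_zero_iff.1 (hy 0)]
  have hρ2 : 0 < 2 * ρ := by positivity
  have hx_eq : ∀ α : Fin k → ℝ, x = y 0 + ∑ i, α i • v i ↔ ∑ i, α i • v i = x - y 0 :=
    fun α => by rw [eq_sub_iff_add_eq', eq_comm]
  obtain ⟨c, hc⟩ := (Submodule.mem_span_range_iff_exists_fun ℝ).1 (AffineSubspace.mem_mk'.1 hx)
  refine ⟨⟨c, (hx_eq c).2 hc, fun β hβ => funext fun i => ?_⟩, fun α hα i => ?_⟩
  · exact Fintype.linearIndependent_iffₛ.1 (linearIndependent_of_separated v hρ2 hv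
      hspan.separated) β c (((hx_eq β).1 hβ).trans hc.symm) i
  · simpa [← (hx_eq α).1 hα] using norm_coeff_le_of_separated v hρ2 hv hspan.separated α i
end
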